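/- arXiv:math/0203102 — 5 statements merged into one kernel-verified Lean document; each statement's English description precedes it below -/
import Mathlib

section
/- Let f : ℕ → ℕ be a surjection such that f⁻¹(n) is infinite for every n. Given equivalence relations Fₖ on Polish spaces Xₖ, the map θ sending x = (x₀, x₁, ...) ∈ ∏ₖ Xₖ to (x_{f(0)}, x_{f(1)}, ...) is a Borel reduction of the product ∏ₖ Fₖ to the Fubini product of the relations Eₖ = F_{f(k)} modulo the ideal of finite subsets of ℕ. -/
/-- If `f : ℕ → ℕ` is a surjection with all fibers infinite, then the map
`θ x = (x_{f(0)}, x_{f(1)}, ...)` is a Borel reduction of the product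
`∏ₖ Fₖ` of equivalence relations to the Fubini product modulo the ideal of
finite sets of the relations `Eₖ = F_{f(k)}`. -/
theorem product_reducible_to_fubini_product
    (f : ℕ → ℕ) (hfs : Function.Surjective f)
    (hfi : ∀ n, (f ⁻¹' {n}).Infinite)
    (X : ℕ → Type*)
    [∀ k, TopologicalSpace (X k)] [∀ k, PolishSpace (X k)]
    [∀ k, MeasurableSpace (X k)] [∀ k, BorelSpace (X k)]
    (F : ∀ k, X k → X k → Prop) (hF : ∀ k, Equivalence (F k)) :
    ∃ θ : (∀ k, X k) → (∀ k, X (f k)),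
      θ = (fun x => fun k => x (f k)) ∧
      Measurable θ ∧
      ∀ x y : ∀ k, X k,
        (∀ k, F k (x k) (y k)) ↔
          {k : ℕ | ¬ F (f k) (θ x k) (θ y k)}.Finite := by
  refine ⟨fun x k => x (f k), rfl, ?_, ?_⟩
  · exact measurable_pi_lambda _ fun k => measurable_pi_apply (f k)
  · intro x y
    constructor
    · intro h
      convert Set.finite_empty
      ext k
      simp [h (f k)]
    · intro h n
      obtain ⟨k, hk, hk2⟩ := ((hfi n).diff h).nonempty
      simp only [Set.mem_setOf_eq, not_not] at hk2
      rcases hk with hk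
      simp only [Set.mem_preimage, Set.mem_singleton_iff] at hk
      rw [← hk]
      exact hk2
end

section
/- Let φ be a lower semicontinuous submeasure on ℕ and define φ_∞(x) = inf_n φ(x ∩ [n, ∞)). Then Exh_φ = {x ⊆ ℕ : φ_∞(x) = 0} is a P-ideal: it is an ideal, and for any sequence of sets xₙ ∈ Exh_φ there is x ∈ Exh_φ with xₙ \ x finite for every n. -/
/-!
Lower semicontinuity makes `φ` countably subadditive, so `φ` is an outer measure on `ℕ`, and
the argument works for any outer measure `μ`. Given `xₙ ∈ Exh`, cut each `xₙ` at a point `kₙ`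
with `μ (xₙ ∩ [kₙ, ∞)) < εₙ`, where `∑ εₙ < ∞`, and let `z` be the union of these tails; each
`xₙ \ z ⊆ [0, kₙ)` is finite. For every `N`, `z` is the union of finitely many members of
`Exh` and of a set of measure at most `∑_{n ≥ N} εₙ`, so `φ_∞ z = 0`.
-/

open scoped ENNReal

open Set MeasureTheory

theorem monotone_of_le_union {α β : Type*} [Preorder β] {φ : Set α → β}
    (h : ∀ x y, φ x ≤ φ (x ∪ y)) : Monotone φ := fun x y hxy => by
  simpa only [union_eq_self_of_subset_left hxy] using h x y

/-- Each `s ∩ Iio m` is finite, hence covered by finitely many members of any cover of `s`. -/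
theorem iUnion_le_tsum_of_lowerSemicontinuous {φ : Set ℕ → ℝ≥0∞} (hempty : φ ∅ = 0)
    (hmono : Monotone φ) (hsubadd : ∀ x y, φ (x ∪ y) ≤ φ x + φ y)
    (hlsc : ∀ x, φ x = ⨆ n : ℕ, φ (x ∩ Iio n)) (a : ℕ → Set ℕ) :
    φ (⋃ n, a n) ≤ ∑' n, φ (a n) := by
  rw [hlsc]
  refine iSup_le fun m => ?_
  obtain ⟨I, hI, hcover⟩ :=
    finite_subset_iUnion ((finite_Iio m).inter_of_right (⋃ n, a n)) inter_subset_left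
  calc φ ((⋃ n, a n) ∩ Iio m) ≤ φ (⋃ n ∈ hI.toFinset, a n) :=
        hmono (by simpa only [Finite.mem_toFinset] using hcover)
    _ ≤ ∑ n ∈ hI.toFinset, φ (a n) := Finset.apply_union_le_sum hempty (hsubadd _ _) _
    _ ≤ ∑' n, φ (a n) := ENNReal.sum_le_tsum _

namespace MeasureTheory.OuterMeasure

noncomputable def ofLowerSemicontinuous (φ : Set ℕ → ℝ≥0∞) (hempty : φ ∅ = 0)
    (hmono : Monotone φ) (hsubadd : ∀ x y, φ (x ∪ y) ≤ φ x + φ y)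
    (hlsc : ∀ x, φ x = ⨆ n : ℕ, φ (x ∩ Iio n)) : OuterMeasure ℕ where
  measureOf := φ
  empty := hempty
  mono h := hmono h
  iUnion_nat a _ := iUnion_le_tsum_of_lowerSemicontinuous hempty hmono hsubadd hlsc a

variable (μ : OuterMeasure ℕ)

noncomputable def tailInf (x : Set ℕ) : ℝ≥0∞ := ⨅ n : ℕ, μ (x ∩ Ici n)

def exh : Set (Set ℕ) := {x | μ.tailInf x = 0}

variable {μ}

theorem tailInf_mono : Monotone μ.tailInf := fun _ _ hxy =>
  iInf_mono fun _ => measure_mono (inter_subset_inter_left _ hxy)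

theorem tailInf_le (x : Set ℕ) : μ.tailInf x ≤ μ x :=
  iInf_le_of_le 0 (measure_mono inter_subset_left)

theorem tailInf_union_le (x y : Set ℕ) :
    μ.tailInf (x ∪ y) ≤ μ.tailInf x + μ.tailInf y := by
  have tail_anti (s : Set ℕ) : Antitone fun n : ℕ => μ (s ∩ Ici n) := fun _ _ hmn =>
    measure_mono (inter_subset_inter_right _ (Ici_subset_Ici.2 hmn))
  unfold tailInf
  rw [ENNReal.iInf_add_iInf fun i j =>
    ⟨max i j, add_le_add (tail_anti x (le_max_left i j)) (tail_anti y (le_max_right i j))⟩]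
  exact iInf_mono fun n => union_inter_distrib_right x y _ ▸ measure_union_le _ _

theorem empty_mem_exh : ∅ ∈ μ.exh := by
  simp [exh, tailInf]

theorem mem_exh_of_subset {x y : Set ℕ} (hx : x ∈ μ.exh) (hyx : y ⊆ x) : y ∈ μ.exh :=
  nonpos_iff_eq_zero.1 (hx ▸ tailInf_mono hyx)

theorem union_mem_exh {x y : Set ℕ} (hx : x ∈ μ.exh) (hy : y ∈ μ.exh) : x ∪ y ∈ μ.exh :=
  nonpos_iff_eq_zero.1 <|
    (tailInf_union_le x y).trans_eq <| by rw [hx.out, hy.out, add_zero]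

theorem biUnion_finset_mem_exh {ι : Type*} (s : Finset ι) {x : ι → Set ℕ}
    (hx : ∀ i ∈ s, x i ∈ μ.exh) : ⋃ i ∈ s, x i ∈ μ.exh :=
  Finset.sup_set_eq_biUnion s x ▸
    Finset.sup_mem _ empty_mem_exh (fun _ hx _ hy => union_mem_exh hx hy) s x hx

theorem iUnion_mem_exh_of_tsum_ne_top {y : ℕ → Set ℕ} (hy : ∀ n, y n ∈ μ.exh)
    (hsum : ∑' n, μ (y n) ≠ ∞) : ⋃ n, y n ∈ μ.exh := by
  refine nonpos_iff_eq_zero.1 <|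
    ge_of_tendsto' (ENNReal.tendsto_sum_nat_add _ hsum) fun N => ?_
  have hsplit : ⋃ n, y n ⊆ (⋃ n ∈ Finset.range N, y n) ∪ ⋃ k, y (k + N) := by
    refine iUnion_subset fun n => ?_
    rcases lt_or_ge n N with hn | hn
    · exact subset_union_of_subset_left (subset_biUnion_of_mem (Finset.mem_range.2 hn)) _
    · refine subset_union_of_subset_right (subset_iUnion_of_subset (n - N) ?_) _
      rw [Nat.sub_add_cancel hn]
  have hhead : ⋃ n ∈ Finset.range N, y n ∈ μ.exh :=
    biUnion_finset_mem_exh _ fun n _ => hy n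
  calc μ.tailInf (⋃ n, y n)
      ≤ μ.tailInf (⋃ n ∈ Finset.range N, y n) + μ.tailInf (⋃ k, y (k + N)) :=
        (tailInf_mono hsplit).trans (tailInf_union_le _ _)
    _ ≤ μ (⋃ k, y (k + N)) := by rw [hhead.out, zero_add]; exact tailInf_le _
    _ ≤ ∑' k, μ (y (k + N)) := measure_iUnion_le _

theorem exists_mem_exh_diff_finite {x : ℕ → Set ℕ} (hx : ∀ n, x n ∈ μ.exh) :
    ∃ z ∈ μ.exh, ∀ n, (x n \ z).Finite := by
  obtain ⟨ε, hε, hεsum⟩ := ENNReal.exists_pos_sum_of_countable' one_ne_zero ℕ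
  have hcut (n : ℕ) : ∃ k : ℕ, μ (x n ∩ Ici k) < ε n :=
    iInf_lt_iff.1 ((hx n).out.trans_lt (hε n))
  choose k hk using hcut
  refine ⟨⋃ n, x n ∩ Ici (k n), iUnion_mem_exh_of_tsum_ne_top
    (fun n => mem_exh_of_subset (hx n) inter_subset_left) ?_, fun n => ?_⟩
  · exact ne_top_of_le_ne_top (hεsum.trans ENNReal.one_lt_top).ne
      (ENNReal.tsum_le_tsum fun n => (hk n).le)
  · refine (finite_Iio (k n)).subset fun p ⟨hpx, hpz⟩ => ?_
    by_contra hp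
    exact hpz (mem_iUnion_of_mem n ⟨hpx, mem_Ici.2 (not_lt.1 hp)⟩)

end MeasureTheory.OuterMeasure

theorem exhaustive_ideal_is_P_ideal_general
    (φ : Set ℕ → ℝ≥0∞)
    (hempty : φ ∅ = 0)
    (hmono : ∀ x y : Set ℕ, φ x ≤ φ (x ∪ y))
    (hsubadd : ∀ x y : Set ℕ, φ (x ∪ y) ≤ φ x + φ y)
    (hlsc : ∀ x : Set ℕ, φ x = ⨆ n : ℕ, φ (x ∩ Set.Iio n)) :
    (let Exh : Set (Set ℕ) := {x | (⨅ n : ℕ, φ (x ∩ Set.Ici n)) = 0}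
     Exh.Nonempty ∧
     (∀ x y : Set ℕ, x ∈ Exh → y ⊆ x → y ∈ Exh) ∧
     (∀ x y : Set ℕ, x ∈ Exh → y ∈ Exh → x ∪ y ∈ Exh) ∧
     (∀ x : ℕ → Set ℕ, (∀ n, x n ∈ Exh) →
        ∃ z ∈ Exh, ∀ n, (x n \ z).Finite)) := by
  let μ := OuterMeasure.ofLowerSemicontinuous φ hempty (monotone_of_le_union hmono) hsubadd hlsc
  exact ⟨⟨∅, μ.empty_mem_exh⟩, fun _ _ => OuterMeasure.mem_exh_of_subset (μ := μ),
    fun _ _ => OuterMeasure.union_mem_exh (μ := μ),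
    fun _ => OuterMeasure.exists_mem_exh_diff_finite (μ := μ)⟩

/-- For a lower semicontinuous submeasure `φ` on `ℕ`, the family
`Exh_φ = {x : φ_∞(x) = 0}`, where `φ_∞(x) = inf_n φ(x ∩ [n,∞))`, is a
P-ideal: it is an ideal, and for any sequence of sets `xₙ ∈ Exh_φ` there is
`x ∈ Exh_φ` with `xₙ \ x` finite for every `n`. -/
theorem exhaustive_ideal_is_P_ideal
    (φ : Set ℕ → ℝ≥0∞)
    (hempty : φ ∅ = 0)
    (hsingleton : ∀ a : ℕ, φ {a} < ⊤)
    (hmono : ∀ x y : Set ℕ, φ x ≤ φ (x ∪ y))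
    (hsubadd : ∀ x y : Set ℕ, φ (x ∪ y) ≤ φ x + φ y)
    (hlsc : ∀ x : Set ℕ, φ x = ⨆ n : ℕ, φ (x ∩ Set.Iio n)) :
    (let Exh : Set (Set ℕ) := {x | (⨅ n : ℕ, φ (x ∩ Set.Ici n)) = 0}
     Exh.Nonempty ∧
     (∀ x y : Set ℕ, x ∈ Exh → y ⊆ x → y ∈ Exh) ∧
     (∀ x y : Set ℕ, x ∈ Exh → y ∈ Exh → x ∪ y ∈ Exh) ∧
     (∀ x : ℕ → Set ℕ, (∀ n, x n ∈ Exh) →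
        ∃ z ∈ Exh, ∀ n, (x n \ z).Finite)) :=
  exhaustive_ideal_is_P_ideal_general φ hempty hmono hsubadd hlsc
end

section
/- Let Z = Exh_φ be a Borel P-ideal on ℕ for a lower semicontinuous submeasure φ, with r_k = φ({k}) and U_n = {k : r_k ≤ 1/n}. Suppose there exists ε > 0 with φ(U_m) > ε for all m. Then there exists a set W ⊆ ℕ with W ∉ Z such that r_k → 0 along k ∈ W (i.e., for every δ > 0, all but finitely many k ∈ W satisfy r_k < δ). -/
open scoped ENNReal
open Filter Set

/-!
Points of `U m` have mass at most `1 / m`, so for `m` large the initial segment `U m ∩ [0, N)`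
has mass at most `N / m ≤ ε / 2`; subadditivity and lower semicontinuity then give a finite block
`U m ∩ [N, n)` of mass `> ε / 2`. Choosing such blocks recursively on consecutive intervals
`[s j, s (j + 1))` with `m j > j`, their union `W` has every tail of mass `≥ ε / 2`, while the
points of `W` beyond `s j` all have mass `≤ 1 / j`.
-/

section Submeasure

variable {φ : Set ℕ → ℝ≥0∞}

theorem monotone_of_le_union_s8 (hmono : ∀ x y : Set ℕ, φ x ≤ φ (x ∪ y)) : Monotone φ :=
  fun x y hxy => by simpa [union_eq_self_of_subset_left hxy] using hmono x y

theorem le_card_mul_of_subadditive (hempty : φ ∅ = 0)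
    (hsubadd : ∀ x y : Set ℕ, φ (x ∪ y) ≤ φ x + φ y) {c : ℝ≥0∞} (t : Finset ℕ)
    (ht : ∀ k ∈ t, φ {k} ≤ c) : φ t ≤ t.card * c := by
  induction t using Finset.induction_on with
  | empty => simp [hempty]
  | insert a t hat ih =>
    rw [Finset.coe_insert, insert_eq, Finset.card_insert_of_notMem hat, Nat.cast_succ, add_mul,
      one_mul, add_comm]
    exact (hsubadd _ _).trans <| add_le_add (ht a (by simp))
      (ih fun k hk => ht k (Finset.mem_insert_of_mem hk))

theorem inter_Iio_le_mul (hempty : φ ∅ = 0)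
    (hsubadd : ∀ x y : Set ℕ, φ (x ∪ y) ≤ φ x + φ y) {c : ℝ≥0∞} {s : Set ℕ}
    (hs : ∀ k ∈ s, φ {k} ≤ c) (N : ℕ) : φ (s ∩ Iio N) ≤ N * c := by
  classical
  set t := (Finset.range N).filter (· ∈ s)
  have hst : s ∩ Iio N = t := by ext k; simp [t, and_comm]
  have hcard : (t.card : ℝ≥0∞) ≤ N := by
    exact_mod_cast (Finset.card_filter_le _ _).trans (Finset.card_range N).le
  rw [hst]
  calc φ t ≤ t.card * c :=
        le_card_mul_of_subadditive hempty hsubadd t fun k hk => hs k (Finset.mem_filter.1 hk).2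
    _ ≤ N * c := by gcongr

theorem exists_lt_inter_Iio (hlsc : ∀ x : Set ℕ, φ x = ⨆ n : ℕ, φ (x ∩ Iio n)) {a : ℝ≥0∞}
    {x : Set ℕ} (h : a < φ x) : ∃ n, a < φ (x ∩ Iio n) := by
  rw [hlsc x] at h
  exact lt_iSup_iff.1 h

theorem exists_block (hempty : φ ∅ = 0)
    (hsubadd : ∀ x y : Set ℕ, φ (x ∪ y) ≤ φ x + φ y)
    (hlsc : ∀ x : Set ℕ, φ x = ⨆ n : ℕ, φ (x ∩ Iio n)) {U : ℕ → Set ℕ}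
    (hU : ∀ n : ℕ, 0 < n → U n = {k : ℕ | φ {k} ≤ 1 / (n : ℝ≥0∞)}) {ε : ℝ≥0∞} (hε : 0 < ε)
    (hbig : ∀ m : ℕ, ε < φ (U m)) (j N : ℕ) :
    ∃ m n, N < n ∧ j < m ∧ ε / 2 < φ (U m ∩ Ico N n) := by
  have hε2 : ε / 2 ≠ ⊤ := ENNReal.div_ne_top (ne_top_of_lt (hbig 0)) two_ne_zero
  have hlim : Tendsto (fun m : ℕ => (N : ℝ≥0∞) * (m : ℝ≥0∞)⁻¹) atTop (nhds 0) := by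
    simpa using ENNReal.Tendsto.const_mul ENNReal.tendsto_inv_nat_nhds_zero (Or.inr (by simp))
  obtain ⟨m, hjm, hm⟩ := ((eventually_gt_atTop j).and
    (hlim.eventually (gt_mem_nhds (ENNReal.half_pos hε.ne')))).exists
  have hhead : φ (U m ∩ Iio N) ≤ ε / 2 := by
    refine (inter_Iio_le_mul hempty hsubadd (fun k hk => ?_) N).trans hm.le
    rw [hU m (by omega)] at hk
    simpa using hk
  have htail : ε / 2 < φ (U m ∩ Ici N) := by
    by_contra! h
    have hsplit : U m = (U m ∩ Iio N) ∪ (U m ∩ Ici N) := by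
      rw [← inter_union_distrib_left, Iio_union_Ici, inter_univ]
    have := (hbig m).trans_le <| (hsplit ▸ hsubadd _ _).trans (add_le_add hhead h)
    exact (ENNReal.add_halves ε ▸ this).false
  obtain ⟨n, hn⟩ := exists_lt_inter_Iio hlsc htail
  rw [inter_assoc, Ici_inter_Iio] at hn
  refine ⟨m, n, ?_, hjm, hn⟩
  by_contra! hnN
  rw [Ico_eq_empty_of_le hnN, inter_empty, hempty] at hn
  exact not_lt_zero hn

theorem finite_setOf_not_lt_of_blocks {U : ℕ → Set ℕ}
    (hU : ∀ n : ℕ, 0 < n → U n = {k : ℕ | φ {k} ≤ 1 / (n : ℝ≥0∞)}) {m s : ℕ → ℕ}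
    (hs : Monotone s) (hm : ∀ j, j < m j) {δ : ℝ≥0∞} (hδ : 0 < δ) :
    {k ∈ ⋃ j, U (m j) ∩ Ico (s j) (s (j + 1)) | ¬ φ {k} < δ}.Finite := by
  obtain ⟨j, hj⟩ := ENNReal.exists_inv_nat_lt hδ.ne'
  refine (finite_Iio (s j)).subset ?_
  rintro k ⟨hkW, hkδ⟩
  obtain ⟨i, hki, -, hk⟩ := mem_iUnion.1 hkW
  rcases lt_or_ge i j with hij | hji
  · exact hk.trans_le (hs hij)
  · rw [hU (m i) (by grind)] at hki
    refine absurd ?_ hkδ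
    calc φ {k} ≤ 1 / (m i : ℝ≥0∞) := hki
      _ ≤ (j : ℝ≥0∞)⁻¹ := by rw [one_div]; gcongr; exact_mod_cast (hji.trans_lt (hm i)).le
      _ < δ := hj

end Submeasure

theorem exists_strictMono_seq_of_forall_exists_gt {P : ℕ → ℕ → ℕ → ℕ → Prop}
    (h : ∀ j N, ∃ m n, N < n ∧ P j m N n) :
    ∃ m s : ℕ → ℕ, StrictMono s ∧ ∀ j, P j (m j) (s j) (s (j + 1)) := by
  choose m n hn hP using h
  let s : ℕ → ℕ := fun j => Nat.rec 0 (fun i N => n i N) j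
  exact ⟨fun j => m j (s j), s, strictMono_nat_of_lt_succ fun j => hn j (s j),
    fun j => hP j (s j)⟩

theorem exists_W_not_in_exh_with_rk_to_zero_general
    (φ : Set ℕ → ℝ≥0∞)
    (hempty : φ ∅ = 0)
    (hmono : ∀ x y : Set ℕ, φ x ≤ φ (x ∪ y))
    (hsubadd : ∀ x y : Set ℕ, φ (x ∪ y) ≤ φ x + φ y)
    (hlsc : ∀ x : Set ℕ, φ x = ⨆ n : ℕ, φ (x ∩ Set.Iio n))
    (U : ℕ → Set ℕ)
    (hU : ∀ n : ℕ, 0 < n → U n = {k : ℕ | φ {k} ≤ 1 / (n : ℝ≥0∞)})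
    (ε : ℝ≥0∞) (hε : 0 < ε) (hbig : ∀ m : ℕ, ε < φ (U m)) :
    ∃ W : Set ℕ,
      (⨅ n : ℕ, φ (W ∩ Set.Ici n)) ≠ 0 ∧
      ∀ δ : ℝ≥0∞, 0 < δ → {k ∈ W | ¬ φ {k} < δ}.Finite := by
  have hmono' := monotone_of_le_union_s8 hmono
  obtain ⟨m, s, hs, hblock⟩ := exists_strictMono_seq_of_forall_exists_gt
    (exists_block hempty hsubadd hlsc hU hε hbig)
  refine ⟨⋃ j, U (m j) ∩ Ico (s j) (s (j + 1)), ?_,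
    fun δ hδ => finite_setOf_not_lt_of_blocks hU hs.monotone (fun j => (hblock j).1) hδ⟩
  have htail (N : ℕ) : ε / 2 ≤ φ ((⋃ j, U (m j) ∩ Ico (s j) (s (j + 1))) ∩ Ici N) := by
    refine (hblock N).2.le.trans (hmono' fun k hk => ⟨mem_iUnion.2 ⟨N, hk⟩, ?_⟩)
    exact hs.le_apply.trans hk.2.1
  exact ((ENNReal.half_pos hε.ne').trans_le (le_iInf htail)).ne'

/-- Let `Z = Exh_φ` for a lower semicontinuous submeasure `φ` on `ℕ`, with
`r_k = φ({k})` and `U_n = {k : r_k ≤ 1/n}` (with `U_0 = ℕ`). If there is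
`ε > 0` with `φ(U_m) > ε` for all `m`, then there is `W ∉ Z` such that
`r_k → 0` along `k ∈ W`: for every `δ > 0` all but finitely many `k ∈ W`
satisfy `r_k < δ`. -/
theorem exists_W_not_in_exh_with_rk_to_zero
    (φ : Set ℕ → ℝ≥0∞)
    (hempty : φ ∅ = 0)
    (hsingleton : ∀ a : ℕ, φ {a} < ⊤)
    (hmono : ∀ x y : Set ℕ, φ x ≤ φ (x ∪ y))
    (hsubadd : ∀ x y : Set ℕ, φ (x ∪ y) ≤ φ x + φ y)
    (hlsc : ∀ x : Set ℕ, φ x = ⨆ n : ℕ, φ (x ∩ Set.Iio n))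
    (U : ℕ → Set ℕ)
    (hU0 : U 0 = Set.univ)
    (hU : ∀ n : ℕ, 0 < n → U n = {k : ℕ | φ {k} ≤ 1 / (n : ℝ≥0∞)})
    (ε : ℝ≥0∞) (hε : 0 < ε) (hbig : ∀ m : ℕ, ε < φ (U m)) :
    ∃ W : Set ℕ,
      (⨅ n : ℕ, φ (W ∩ Set.Ici n)) ≠ 0 ∧
      ∀ δ : ℝ≥0∞, 0 < δ → {k ∈ W | ¬ φ {k} < δ}.Finite :=
  exists_W_not_in_exh_with_rk_to_zero_general φ hempty hmono hsubadd hlsc U hU ε hε hbig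
end

section
/- Let φ be a lower semicontinuous submeasure on ℕ with r_k = φ({k}) → 0 as k → ∞, and let Z = Exh_φ be the associated ideal. Consider the shift action of the group (Z, Δ) on 2^ℕ by symmetric difference, with Z given the topology induced by the metric r(x,y) = φ(x Δ y). Then every point x ∈ 2^ℕ is turbulent: for every open set X ⊆ 2^ℕ containing x and every ε > 0, letting G = {g ∈ Z : φ(g) < ε}, the local orbit O(x, X, G) is somewhere dense in 2^ℕ. -/
open scoped ENNReal Topology
open Filter Set

/-
An open `X ∋ x` contains a cylinder `{y | ∀ i < M, y i = x i}`, and `M` may be taken so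
large that `φ {k} < ε` for `k ≥ M`. A point `y` of this cylinder is the limit of its prefixes
spliced onto `x`, and each splice arises from the previous one by flipping a single coordinate
`m ≥ M`, i.e. by acting with `{m}`, a finite (hence exhaustive) set of submeasure `< ε`. So the
local orbit is dense in the cylinder.
-/

lemma iInf_inter_Ici_eq_zero_of_finite (φ : Set ℕ → ℝ≥0∞) (hempty : φ ∅ = 0)
    {s : Set ℕ} (hs : s.Finite) : ⨅ n : ℕ, φ (s ∩ Ici n) = 0 := by
  obtain ⟨N, hN⟩ := hs.bddAbove
  have hempty_tail : s ∩ Ici (N + 1) = ∅ :=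
    eq_empty_of_forall_notMem fun k ⟨hks, hkN⟩ => by
      have := hN hks
      simp only [mem_Ici] at hkN
      omega
  exact le_antisymm (iInf_le_of_le (N + 1) (by rw [hempty_tail, hempty])) bot_le

lemma Bool.eq_or_eq_xor_of_forall_ne_eq {a b : ℕ → Bool} {m : ℕ} (hab : ∀ n ≠ m, a n = b n) :
    a = b ∨ b = fun n => xor (decide (n = m)) (a n) := by
  by_cases hm : a m = b m
  · left
    funext n
    by_cases hn : n = m
    · rwa [hn]
    · exact hab n hn
  · right
    funext n
    by_cases hn : n = m
    · subst hn
      cases h : a n <;> cases h' : b n <;> simp_all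
    · simp [hn, hab n hn]

namespace PiNat

variable {E : ℕ → Type*}

lemma exists_cylinder_subset_of_isOpen [∀ n, TopologicalSpace (E n)] [∀ n, DiscreteTopology (E n)]
    {X : Set (∀ n, E n)} (hX : IsOpen X) {x : ∀ n, E n} (hx : x ∈ X) :
    ∃ M, cylinder x M ⊆ X := by
  obtain ⟨_, ⟨y, M, rfl⟩, hxy, hsub⟩ :=
    (isTopologicalBasis_cylinders E).exists_subset_of_mem_open hx hX
  exact ⟨M, by rwa [← mem_cylinder_iff_eq.1 hxy] at hsub⟩

lemma tendsto_splice_atTop [∀ n, TopologicalSpace (E n)] (x y : ∀ n, E n) :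
    Tendsto (fun m n => if n < m then y n else x n) atTop (𝓝 y) :=
  tendsto_pi_nhds.2 fun n =>
    tendsto_const_nhds.congr' ((eventually_gt_atTop n).mono fun _ h => (if_pos h).symm)

lemma splice_eq_of_mem_cylinder {x y : ∀ n, E n} {M m : ℕ} (hy : y ∈ cylinder x M) (hm : m ≤ M) :
    (fun n => if n < m then y n else x n) = x := by
  funext n
  split_ifs with hn
  · exact hy n (hn.trans_le hm)
  · rfl

lemma splice_mem_cylinder {x y : ∀ n, E n} {M : ℕ} (hy : y ∈ cylinder x M) (m : ℕ) :
    (fun n => if n < m then y n else x n) ∈ cylinder x M := fun i hi => by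
  dsimp only
  split_ifs
  exacts [hy i hi, rfl]

lemma splice_succ_eq_of_ne {x y : ∀ n, E n} {m : ℕ} :
    ∀ n ≠ m, (if n < m then y n else x n) = if n < m + 1 then y n else x n := by
  intro n hn
  have : n < m ↔ n < m + 1 := by omega
  simp only [this]

def SingleChangesConnected (r : (∀ n, E n) → (∀ n, E n) → Prop) (x : ∀ n, E n) (M : ℕ) : Prop :=
  ∀ a ∈ cylinder x M, ∀ b ∈ cylinder x M, ∀ m ≥ M, (∀ n ≠ m, a n = b n) →
    Relation.ReflTransGen r a b

variable {r : (∀ n, E n) → (∀ n, E n) → Prop} {x : ∀ n, E n} {M : ℕ}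

lemma reflTransGen_splice (hr : SingleChangesConnected r x M) {y : ∀ n, E n}
    (hy : y ∈ cylinder x M) {m : ℕ} (hm : M ≤ m) :
    Relation.ReflTransGen r x (fun n => if n < m then y n else x n) := by
  induction m, hm using Nat.le_induction with
  | base => rw [splice_eq_of_mem_cylinder hy le_rfl]
  | succ m hMm ih =>
    exact ih.trans (hr _ (splice_mem_cylinder hy m) _ (splice_mem_cylinder hy (m + 1)) m hMm
      splice_succ_eq_of_ne)

lemma cylinder_subset_closure_reflTransGen (hr : SingleChangesConnected r x M)
    [∀ n, TopologicalSpace (E n)] :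
    cylinder x M ⊆ closure {y | Relation.ReflTransGen r x y} := fun y hy =>
  mem_closure_of_tendsto (tendsto_splice_atTop x y)
    ((eventually_ge_atTop M).mono fun _ hm => reflTransGen_splice hr hy hm)

lemma not_isNowhereDense_reflTransGen (hr : SingleChangesConnected r x M)
    [∀ n, TopologicalSpace (E n)] [∀ n, DiscreteTopology (E n)] :
    ¬ IsNowhereDense {y | Relation.ReflTransGen r x y} := fun h => by
  have hx := interior_maximal (cylinder_subset_closure_reflTransGen hr) (isOpen_cylinder E x M)
    (self_mem_cylinder x M)
  rwa [h] at hx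

end PiNat

open PiNat in
theorem shift_action_turbulent_general
    (φ : Set ℕ → ℝ≥0∞)
    (hempty : φ ∅ = 0)
    (htend : Filter.Tendsto (fun k : ℕ => φ {k}) Filter.atTop (nhds 0)) :
    ∀ x : ℕ → Bool, ∀ X : Set (ℕ → Bool), IsOpen X → x ∈ X →
    ∀ ε : ℝ≥0∞, 0 < ε →
    ¬ IsNowhereDense {y : ℕ → Bool |
        Relation.ReflTransGen
          (fun a b : ℕ → Bool =>
            a ∈ X ∧ b ∈ X ∧
            ∃ g : ℕ → Bool,
              ((⨅ n : ℕ, φ ({m | g m = true} ∩ Set.Ici n)) = 0 ∧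
                φ {m | g m = true} < ε) ∧
              b = fun n => xor (g n) (a n))
          x y} := by
  intro x X hX hxX ε hε
  obtain ⟨M₁, hM₁⟩ := exists_cylinder_subset_of_isOpen hX hxX
  obtain ⟨M₂, hM₂⟩ := eventually_atTop.1 (htend.eventually_lt_const hε)
  refine not_isNowhereDense_reflTransGen (M := max M₁ M₂) fun a ha b hb m hm hab => ?_
  have hmem : ∀ {c}, c ∈ cylinder x (max M₁ M₂) → c ∈ X := fun hc =>
    hM₁ (cylinder_anti x (le_max_left M₁ M₂) hc)
  have hsingle : {k | decide (k = m) = true} = {m} := by ext; simp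
  rcases Bool.eq_or_eq_xor_of_forall_ne_eq hab with rfl | rfl
  · rfl
  · refine .single ⟨hmem ha, hmem hb, fun n => decide (n = m), ⟨?_, ?_⟩, rfl⟩ <;> rw [hsingle]
    · exact iInf_inter_Ici_eq_zero_of_finite φ hempty (finite_singleton m)
    · exact hM₂ m (le_of_max_le_right hm)

/-- Let `φ` be a lower semicontinuous submeasure on `ℕ` with `φ({k}) → 0`, and
let `Z = Exh_φ` act on Cantor space by symmetric difference (pointwise `xor`).
Then every point `x` of `2^ℕ` is turbulent: for every open `X ∋ x` and every
`ε > 0`, taking `G = {g ∈ Z : φ(g) < ε}` (the `ε`-ball around `∅` in the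
submeasure topology of `Z`), the local orbit of `x` — the set of points of `X`
reachable from `x` by finitely many steps `a ↦ g Δ a` with `g ∈ G`, all
intermediate points staying in `X` — is somewhere dense (not nowhere dense)
in `2^ℕ`. -/
theorem shift_action_turbulent
    (φ : Set ℕ → ℝ≥0∞)
    (hempty : φ ∅ = 0)
    (hsingleton : ∀ a : ℕ, φ {a} < ⊤)
    (hmono : ∀ x y : Set ℕ, φ x ≤ φ (x ∪ y))
    (hsubadd : ∀ x y : Set ℕ, φ (x ∪ y) ≤ φ x + φ y)
    (hlsc : ∀ x : Set ℕ, φ x = ⨆ n : ℕ, φ (x ∩ Set.Iio n))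
    (htend : Filter.Tendsto (fun k : ℕ => φ {k}) Filter.atTop (nhds 0)) :
    ∀ x : ℕ → Bool, ∀ X : Set (ℕ → Bool), IsOpen X → x ∈ X →
    ∀ ε : ℝ≥0∞, 0 < ε →
    ¬ IsNowhereDense {y : ℕ → Bool |
        Relation.ReflTransGen
          (fun a b : ℕ → Bool =>
            a ∈ X ∧ b ∈ X ∧
            ∃ g : ℕ → Bool,
              ((⨅ n : ℕ, φ ({m | g m = true} ∩ Set.Ici n)) = 0 ∧
                φ {m | g m = true} < ε) ∧
              b = fun n => xor (g n) (a n))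
          x y} :=
  shift_action_turbulent_general φ hempty htend
end

section
/- Suppose a group G acts on a Polish space X, and for x ∈ X with a local orbit O(x, U, G₀) (for U open, G₀ a set of group elements) that is somewhere dense in U, the set U_x = U ∩ int(cl(O(x, U, G₀))) is a nonempty open set which is invariant under the local equivalence relation ∼ generated by single G₀-moves staying inside U; moreover O(x, U, G₀) ⊆ U_x and O(x, U, G₀) equals the local orbit of x computed inside U_x. -/
/-!
A single move `a ↦ g • a` with `a, g • a ∈ U` is a homeomorphism, and it maps the part of the
local orbit `O` lying in `U ∩ g⁻¹ U` back into `O`. Hence it carries points of `U ∩ int(cl O)`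
into `int(cl O)`, so `U_x = U ∩ int(cl O)` is saturated for `∼`. Being open, nonempty and
contained in `cl O`, it meets `O`, so it contains the whole class `O`; and a chain of moves
starting in a saturated set never leaves it.
-/

namespace Relation

variable {α : Type*} {r : α → α → Prop} {S : Set α} {a b : α}

theorem EqvGen.mem_iff_of_rel_mem_iff (hS : ∀ a b, r a b → (a ∈ S ↔ b ∈ S))
    (h : EqvGen r a b) : a ∈ S ↔ b ∈ S :=
  (Equivalence.eqvGen_iff (r := fun a b => a ∈ S ↔ b ∈ S)
    ⟨fun _ => Iff.rfl, Iff.symm, Iff.trans⟩).1 (h.mono hS)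

theorem EqvGen.restrict_of_rel_mem_iff (hS : ∀ a b, r a b → (a ∈ S ↔ b ∈ S))
    (h : EqvGen r a b) (ha : a ∈ S) : EqvGen (fun a b => a ∈ S ∧ b ∈ S ∧ r a b) a b := by
  induction h with
  | rel a b hab => exact .rel _ _ ⟨ha, (hS a b hab).1 ha, hab⟩
  | refl a => exact .refl a
  | symm a b hab ih => exact .symm _ _ (ih ((hab.mem_iff_of_rel_mem_iff hS).2 ha))
  | trans a b c hab _ ih₁ ih₂ =>
    exact (ih₁ ha).trans _ _ _ (ih₂ ((hab.mem_iff_of_rel_mem_iff hS).1 ha))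

theorem eqvGen_class_mem_iff_of_rel {x : α} (hab : r a b) :
    a ∈ {y | EqvGen r x y} ↔ b ∈ {y | EqvGen r x y} :=
  ⟨fun h => h.trans _ _ _ (.rel _ _ hab), fun h => h.trans _ _ _ (.symm _ _ (.rel _ _ hab))⟩

end Relation

section LocalOrbit

variable {G X : Type*} [Group G] [MulAction G X] [TopologicalSpace X] [ContinuousConstSMul G X]

theorem smul_mem_interior_closure_of_mapsTo {U S : Set X} (hU : IsOpen U) {g : G}
    (hS : ∀ y ∈ S ∩ U, g • y ∈ U → g • y ∈ S) {a : X} (ha : a ∈ interior (closure S))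
    (haU : a ∈ U) (hgaU : g • a ∈ U) : g • a ∈ interior (closure S) := by
  set V := interior (closure S) ∩ U ∩ (g • ·) ⁻¹' U
  have hV : IsOpen V := (isOpen_interior.inter hU).inter (hU.preimage (continuous_const_smul g))
  have hV_sub : V ⊆ closure (V ∩ S) := fun v hv =>
    hV.inter_closure ⟨hv, interior_subset hv.1.1⟩
  have hVS : (g • ·) '' (V ∩ S) ⊆ S := by
    rintro _ ⟨y, ⟨⟨⟨-, hyU⟩, hgyU⟩, hyS⟩, rfl⟩
    exact hS y ⟨hyS, hyU⟩ hgyU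
  have himage : (g • ·) '' V ⊆ closure S := by
    rintro _ ⟨v, hv, rfl⟩
    exact closure_mono hVS <|
      mem_closure_image (continuous_const_smul g).continuousAt (hV_sub hv)
  exact interior_maximal himage (isOpenMap_smul g V hV) ⟨a, ⟨⟨ha, haU⟩, hgaU⟩, rfl⟩

def localMoveRel (G₀ : Set G) (U : Set X) (a b : X) : Prop :=
  a ∈ U ∧ b ∈ U ∧ ∃ g ∈ G₀, b = g • a

theorem localMoveRel_inter_interior_closure_mem_iff {G₀ : Set G} {U S : Set X} (hU : IsOpen U)
    (hS : ∀ a b, localMoveRel G₀ U a b → (a ∈ S ↔ b ∈ S)) {a b : X}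
    (hab : localMoveRel G₀ U a b) :
    a ∈ U ∩ interior (closure S) ↔ b ∈ U ∩ interior (closure S) := by
  obtain ⟨haU, hbU, g, hg, rfl⟩ := hab
  refine ⟨fun ha => ⟨hbU, smul_mem_interior_closure_of_mapsTo hU ?_ ha.2 haU hbU⟩,
    fun hb => ⟨haU, ?_⟩⟩
  · exact fun y hy hgyU => (hS y _ ⟨hy.2, hgyU, g, hg, rfl⟩).1 hy.1
  · have hS' : ∀ y ∈ S ∩ U, g⁻¹ • y ∈ U → g⁻¹ • y ∈ S := fun y hy hgyU =>
      (hS _ y ⟨hgyU, hy.2, g, hg, (smul_inv_smul g y).symm⟩).2 hy.1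
    simpa using smul_mem_interior_closure_of_mapsTo hU hS' hb.2 hbU (by simpa using haU)

end LocalOrbit

theorem local_orbit_somewhere_dense_structure_general
    {G X : Type*} [Group G] [TopologicalSpace G]
    [TopologicalSpace X]
    [MulAction G X] [ContinuousSMul G X]
    (U : Set X) (hU : IsOpen U) (G₀ : Set G) (x : X)
    (R : X → X → Prop)
    (hR : R = fun a b => a ∈ U ∧ b ∈ U ∧ ∃ g ∈ G₀, b = g • a)
    (O : Set X) (hO : O = {y | Relation.EqvGen R x y})
    (hsd : (interior (closure O) ∩ U).Nonempty) :
    (let Ux : Set X := U ∩ interior (closure O)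
     Ux.Nonempty ∧ IsOpen Ux ∧
     (∀ a b : X, a ∈ Ux → Relation.EqvGen R a b → b ∈ Ux) ∧
     O ⊆ Ux ∧
     O = {y | Relation.EqvGen
        (fun a b => a ∈ Ux ∧ b ∈ Ux ∧ ∃ g ∈ G₀, b = g • a) x y}) := by
  intro Ux
  change R = localMoveRel G₀ U at hR
  subst hR hO
  have hUx_open : IsOpen Ux := hU.inter isOpen_interior
  have hUx_ne : Ux.Nonempty := hsd.mono fun z hz => ⟨hz.2, hz.1⟩
  have hUx_sat : ∀ a b, localMoveRel G₀ U a b → (a ∈ Ux ↔ b ∈ Ux) := fun a b =>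
    localMoveRel_inter_interior_closure_mem_iff hU fun _ _ => Relation.eqvGen_class_mem_iff_of_rel
  obtain ⟨y, hyO, hyUx⟩ : ({y | Relation.EqvGen (localMoveRel G₀ U) x y} ∩ Ux).Nonempty :=
    (closure_inter_open_nonempty_iff hUx_open).1 <|
      hUx_ne.mono fun z hz => ⟨interior_subset hz.2, hz⟩
  have hx : x ∈ Ux := (hyO.mem_iff_of_rel_mem_iff hUx_sat).2 hyUx
  have hO_sub : {y | Relation.EqvGen (localMoveRel G₀ U) x y} ⊆ Ux := fun y hy =>
    (hy.mem_iff_of_rel_mem_iff hUx_sat).1 hx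
  refine ⟨hUx_ne, hUx_open, fun a b ha hab => (hab.mem_iff_of_rel_mem_iff hUx_sat).1 ha,
    hO_sub, ?_⟩
  ext y
  refine ⟨fun hy => (hy.restrict_of_rel_mem_iff hUx_sat hx).mono ?_, fun hy => hy.mono ?_⟩
  · exact fun a b ⟨ha, hb, hab⟩ => ⟨ha, hb, hab.2.2⟩
  · exact fun a b ⟨ha, hb, hab⟩ => ⟨ha.1, hb.1, hab⟩

/-- Suppose a Polish group `G` acts continuously on a Polish space `X`, `U` is
open, `G₀ ⊆ G`, and the local orbit `O = O(x, U, G₀)` of a point `x ∈ U` is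
somewhere dense in `U`. Then `U_x = U ∩ int(cl O)` is a nonempty open set,
invariant under the local equivalence relation `∼` generated by single
`G₀`-moves staying inside `U`; moreover `O ⊆ U_x` and `O` coincides with the
local orbit of `x` computed inside `U_x`. -/
theorem local_orbit_somewhere_dense_structure
    {G X : Type*} [Group G] [TopologicalSpace G] [IsTopologicalGroup G]
    [PolishSpace G] [TopologicalSpace X] [PolishSpace X]
    [MulAction G X] [ContinuousSMul G X]
    (U : Set X) (hU : IsOpen U) (G₀ : Set G) (x : X) (hx : x ∈ U)
    (R : X → X → Prop)
    (hR : R = fun a b => a ∈ U ∧ b ∈ U ∧ ∃ g ∈ G₀, b = g • a)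
    (O : Set X) (hO : O = {y | Relation.EqvGen R x y})
    (hsd : (interior (closure O) ∩ U).Nonempty) :
    (let Ux : Set X := U ∩ interior (closure O)
     Ux.Nonempty ∧ IsOpen Ux ∧
     (∀ a b : X, a ∈ Ux → Relation.EqvGen R a b → b ∈ Ux) ∧
     O ⊆ Ux ∧
     O = {y | Relation.EqvGen
        (fun a b => a ∈ Ux ∧ b ∈ Ux ∧ ∃ g ∈ G₀, b = g • a) x y}) :=
  local_orbit_somewhere_dense_structure_general U hU G₀ x R hR O hO hsd
end
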